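/- Let G be an n-vertex unicyclic graph with unique cycle C_l = v_1…v_l and tree branches T_1,…,T_l, and let x ∈ V(T_i), y ∈ V(T_j). Then the expected hitting time satisfies H_{xy} = n·r(x,y) + R(y) − R(x) + d(y, v_j) − d(x, v_i). -/

import Mathlib

open SimpleGraph Finset

attribute [local instance] Classical.propDecidable

variable {V : Type*}

/-- Degree of a vertex as a real number. -/
noncomputable def degR [Fintype V] (G : SimpleGraph V) (x : V) : ℝ :=
  ((Finset.univ.filter fun y => G.Adj x y).card : ℝ)

/-- Number of edges of a graph. -/
noncomputable def esize (G : SimpleGraph V) : ℕ := Nat.card G.edgeSet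

/-- Dirichlet energy of a potential. -/
noncomputable def energyFn [Fintype V] (G : SimpleGraph V) (φ : V → ℝ) : ℝ :=
  (1/2) * ∑ u, ∑ v, if G.Adj u v then (φ u - φ v)^2 else 0

/-- Effective resistance between two vertices (unit resistors on edges),
via the Dirichlet variational principle: the reciprocal of the minimal energy
of a potential with value 1 at `x` and 0 at `y`. -/
noncomputable def eres [Fintype V] (G : SimpleGraph V) (x y : V) : ℝ :=
  (sInf {e : ℝ | ∃ φ : V → ℝ, φ x = 1 ∧ φ y = 0 ∧ e = energyFn G φ})⁻¹

/-- The transition matrix of the simple random walk, killed at `y`. -/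
noncomputable def hitMat [Fintype V] (G : SimpleGraph V) (y : V) : Matrix V V ℝ :=
  Matrix.of fun u v => if v = y then 0 else if G.Adj u v then (degR G u)⁻¹ else 0

/-- Expected hitting time `H_{xy}` of the simple random walk from `x` to `y`,
expressed as the sum of the survival probabilities of the walk killed at `y`. -/
noncomputable def hitting [Fintype V] (G : SimpleGraph V) (x y : V) : ℝ :=
  if x = y then 0 else ∑' k : ℕ, ∑ z, (hitMat G y ^ k) x z

/-- Resistance-centrality `R(x)`. -/
noncomputable def Rres [Fintype V] (G : SimpleGraph V) (x : V) : ℝ := ∑ y, eres G x y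

/-- Weighted resistance-centrality `R^w(x)`. -/
noncomputable def Rw [Fintype V] (G : SimpleGraph V) (x : V) : ℝ :=
  ∑ y, degR G y * eres G x y

/-- Kirchhoff index `Kf(G)`. -/
noncomputable def Kf [Fintype V] (G : SimpleGraph V) : ℝ :=
  (1/2) * ∑ x, ∑ y, eres G x y

/-- Additive degree-Kirchhoff index `Kf⁺(G)`. -/
noncomputable def KfPlus [Fintype V] (G : SimpleGraph V) : ℝ :=
  (1/2) * ∑ x, ∑ y, (degR G x + degR G y) * eres G x y

/-- Multiplicative degree-Kirchhoff index `Kf*(G)`. -/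
noncomputable def KfStar [Fintype V] (G : SimpleGraph V) : ℝ :=
  (1/2) * ∑ x, ∑ y, degR G x * degR G y * eres G x y

/-- Cover cost `CC(x) = Σ_y H_{xy}`. -/
noncomputable def coverCost [Fintype V] (G : SimpleGraph V) (x : V) : ℝ :=
  ∑ y, hitting G x y

/-- Reverse cover cost `RC(x) = Σ_y H_{yx}`. -/
noncomputable def reverseCoverCost [Fintype V] (G : SimpleGraph V) (x : V) : ℝ :=
  ∑ y, hitting G y x

/-- Centrality (transmission) `D(x) = Σ_y d(x,y)`. -/
noncomputable def Dcent [Fintype V] (G : SimpleGraph V) (x : V) : ℝ :=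
  ∑ y, (G.dist x y : ℝ)

/-- Weighted centrality `D^w(x) = Σ_y deg(y)·d(x,y)`. -/
noncomputable def Dw [Fintype V] (G : SimpleGraph V) (x : V) : ℝ :=
  ∑ y, degR G y * (G.dist x y : ℝ)

/-- Wiener index `W(G)`. -/
noncomputable def Wiener [Fintype V] (G : SimpleGraph V) : ℝ :=
  (1/2) * ∑ x, ∑ y, (G.dist x y : ℝ)

/-- `D_{T}(v)`: sum of distances from `v` to the vertices of its connected
component in `G'` (used for the branch trees of a unicyclic graph). -/
noncomputable def branchD [Fintype V] (G' : SimpleGraph V) (v : V) : ℝ :=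
  ∑ u, if G'.Reachable v u then (G'.dist v u : ℝ) else 0

/-- The set of edges of the cycle `c 0 - c 1 - ⋯ - c (l-1) - c 0`. -/
def cycleEdges {l : ℕ} [NeZero l] (c : Fin l → V) : Set (Sym2 V) :=
  Set.range fun i : Fin l => s(c i, c (i + 1))

/-- Distance from a vertex to a set of vertices. -/
noncomputable def distToSet [Fintype V] (G : SimpleGraph V) (x : V) (s : Set V) : ℕ :=
  sInf {d | ∃ y ∈ s, G.dist x y = d}

/-- `v` is the center of a star. -/
def IsStarCenter (G : SimpleGraph V) (v : V) : Prop := ∀ u, u ≠ v → G.Adj v u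

/-- `G` is a star. -/
def IsStar (G : SimpleGraph V) : Prop := ∃ v, IsStarCenter G v

/-- The lollipop graph `P_n^l` : a cycle `C_l` on `0,…,l-1` together with a
path on `l,…,n-1` attached at the cycle vertex `0`. -/
def lollipop (n l : ℕ) : SimpleGraph (Fin n) :=
  SimpleGraph.fromRel (fun a b =>
    (a.val + 1 = b.val ∧ b.val < l) ∨ (a.val = 0 ∧ b.val = l - 1) ∨
    (a.val = 0 ∧ b.val = l) ∨ (l ≤ a.val ∧ a.val + 1 = b.val))

/-- The graph `S_n^l` : a cycle `C_l` on `0,…,l-1` with `n - l` pendant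
vertices `l,…,n-1` attached at the cycle vertex `0`. -/
def starCycle (n l : ℕ) : SimpleGraph (Fin n) :=
  SimpleGraph.fromRel (fun a b =>
    (a.val + 1 = b.val ∧ b.val < l) ∨ (a.val = 0 ∧ b.val = l - 1) ∨
    (a.val = 0 ∧ l ≤ b.val))

/-- The cycle graph `C_n` on `Fin n`. -/
def cycleG (n : ℕ) : SimpleGraph (Fin n) :=
  SimpleGraph.fromRel (fun a b => a.val + 1 = b.val ∨ (a.val = 0 ∧ b.val = n - 1))


/-!
Let `L` be the Laplacian and `N = (L + J/n)⁻¹`. Dirichlet's principle gives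
`r(a, b) = N a a + N b b - 2 N a b`, and hence, for every potential `g`,
`∑ z, (L g) z * (r(y, z) - r(x, z)) = 2 (g x - g y)`.

The hitting times `h = H_{· y}` satisfy the first-step equations, i.e. `L h = deg - 2|E| δ_y`
(summability of the survival probabilities follows from comparison with a solution of these
equations). In a unicyclic graph the distance `d` to the cycle satisfies `L d = 2 - deg`: at
each vertex `u` the slacks `d u + 1 - d v` over the neighbours `v` are nonnegative and sum to
at least `2` (two cycle neighbours, or one neighbour closer to the cycle), while altogether they
sum to `2|E| = 2n`. So `L (h + d) = 2 - 2n δ_y`, and pairing with the resistances gives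
`H_{xy} = n r(x, y) + R(y) - R(x) + d y - d x`. Finally `d x = d(x, v_i)` for `x ∈ T_i`, since the
slack count forces every vertex off the cycle to have a unique neighbour closer to the cycle.
-/

open Matrix

section Laplacian

variable [Fintype V] (G : SimpleGraph V)

lemma degR_eq_degree (u : V) : degR G u = G.degree u := by
  rw [degR, ← card_neighborFinset_eq_degree, neighborFinset_eq_filter]

lemma sum_lapMatrix_mulVec (g : V → ℝ) : ∑ u, (G.lapMatrix ℝ *ᵥ g) u = 0 := by
  have h := dotProduct_mulVec (fun _ => (1 : ℝ)) (G.lapMatrix ℝ) g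
  rw [← mulVec_transpose, (isSymm_lapMatrix ℝ G).eq, lapMatrix_mulVec_const_eq_zero] at h
  simpa [dotProduct] using h

lemma lapMatrix_mulVec_const (a : ℝ) : G.lapMatrix ℝ *ᵥ (fun _ => a) = 0 := by
  rw [show (fun _ => a) = a • fun _ : V => (1 : ℝ) by ext; simp, mulVec_smul,
    lapMatrix_mulVec_const_eq_zero, smul_zero]

lemma energyFn_eq_dotProduct (φ : V → ℝ) :
    energyFn G φ = φ ⬝ᵥ (G.lapMatrix ℝ *ᵥ φ) := by
  rw [← toLinearMap₂'_apply', lapMatrix_toLinearMap₂', energyFn]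
  ring

lemma dotProduct_lapMatrix_comm (φ ψ : V → ℝ) :
    φ ⬝ᵥ (G.lapMatrix ℝ *ᵥ ψ) = ψ ⬝ᵥ (G.lapMatrix ℝ *ᵥ φ) := by
  rw [dotProduct_mulVec, ← vecMul_transpose, (isSymm_lapMatrix ℝ G).eq, dotProduct_comm]

lemma dotProduct_lapMatrix_self_nonneg (φ : V → ℝ) :
    0 ≤ φ ⬝ᵥ (G.lapMatrix ℝ *ᵥ φ) := by
  simpa using (posSemidef_lapMatrix ℝ G).dotProduct_mulVec_nonneg φ

lemma sum_degR_eq_two_mul_card_edgeSet :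
    ∑ u, degR G u = 2 * Nat.card G.edgeSet := by
  simp only [degR_eq_degree]
  exact_mod_cast (sum_degrees_eq_twice_card_edges G).trans
    (by rw [edgeFinset_card, Nat.card_eq_fintype_card])

end Laplacian

section Green

variable [Fintype V] {G : SimpleGraph V}

variable (V) in
noncomputable def meanMatrix : Matrix V V ℝ := Matrix.of fun _ _ => (Fintype.card V : ℝ)⁻¹

lemma meanMatrix_mulVec_apply (g : V → ℝ) (u : V) :
    (meanMatrix V *ᵥ g) u = (Fintype.card V : ℝ)⁻¹ * ∑ v, g v := by
  simp [meanMatrix, mulVec, dotProduct, Finset.mul_sum]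

lemma meanMatrix_mul_lapMatrix : meanMatrix V * G.lapMatrix ℝ = 0 := by
  ext u v
  have h := sum_lapMatrix_mulVec G (Pi.single v 1)
  simp only [mulVec_single_one, col_apply] at h
  simp [meanMatrix, mul_apply, ← Finset.mul_sum, h]

lemma lapMatrix_mul_meanMatrix : G.lapMatrix ℝ * meanMatrix V = 0 := by
  rw [← (isSymm_lapMatrix ℝ G).eq, ← transpose_transpose (meanMatrix V), ← transpose_mul,
    show (meanMatrix V)ᵀ = meanMatrix V from rfl, meanMatrix_mul_lapMatrix, transpose_zero]

lemma meanMatrix_mul_self [Nonempty V] : meanMatrix V * meanMatrix V = meanMatrix V := by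
  ext u v
  simp [meanMatrix, mul_apply]

lemma eq_zero_of_lapMatrix_add_meanMatrix_mulVec_eq_zero (hconn : G.Connected) {v : V → ℝ}
    (hv : (G.lapMatrix ℝ + meanMatrix V) *ᵥ v = 0) : v = 0 := by
  have := hconn.nonempty
  have hmean : meanMatrix V *ᵥ v = 0 := by
    simpa [mulVec_mulVec, mul_add, meanMatrix_mul_lapMatrix, meanMatrix_mul_self] using
      congrArg (meanMatrix V *ᵥ ·) hv
  have hconst : ∀ a b, v a = v b := by
    have hlap : G.lapMatrix ℝ *ᵥ v = 0 := by rwa [add_mulVec, hmean, add_zero] at hv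
    exact fun a b => (lapMatrix_mulVec_eq_zero_iff_forall_reachable G).mp hlap a b (hconn a b)
  ext a
  have hsum := congrFun hmean a
  rw [meanMatrix_mulVec_apply, Finset.sum_congr rfl fun b _ => hconst b a] at hsum
  simpa using hsum

lemma isUnit_det_lapMatrix_add_meanMatrix (hconn : G.Connected) :
    IsUnit (G.lapMatrix ℝ + meanMatrix V).det := by
  rw [← isUnit_iff_isUnit_det, ← mulVec_injective_iff_isUnit]
  intro v w h
  rw [← sub_eq_zero] at h ⊢
  exact eq_zero_of_lapMatrix_add_meanMatrix_mulVec_eq_zero hconn (by rwa [mulVec_sub])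

variable (G) in
/-- A generalized inverse of the Laplacian of a connected graph. -/
noncomputable def greenMatrix : Matrix V V ℝ := (G.lapMatrix ℝ + meanMatrix V)⁻¹

lemma greenMatrix_isSymm : (greenMatrix G).IsSymm :=
  IsSymm.inv ((isSymm_lapMatrix ℝ G).add (by rfl))

lemma greenMatrix_mul_lapMatrix_add_meanMatrix (hconn : G.Connected) :
    greenMatrix G * (G.lapMatrix ℝ + meanMatrix V) = 1 :=
  nonsing_inv_mul _ (isUnit_det_lapMatrix_add_meanMatrix hconn)

lemma lapMatrix_add_meanMatrix_mul_greenMatrix (hconn : G.Connected) :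
    (G.lapMatrix ℝ + meanMatrix V) * greenMatrix G = 1 :=
  mul_nonsing_inv _ (isUnit_det_lapMatrix_add_meanMatrix hconn)

lemma greenMatrix_mul_lapMatrix (hconn : G.Connected) :
    greenMatrix G * G.lapMatrix ℝ = 1 - meanMatrix V := by
  have := hconn.nonempty
  have hmean : greenMatrix G * meanMatrix V = meanMatrix V := by
    conv_rhs => rw [← one_mul (meanMatrix V), ← greenMatrix_mul_lapMatrix_add_meanMatrix hconn,
      Matrix.mul_assoc, add_mul, lapMatrix_mul_meanMatrix, meanMatrix_mul_self, zero_add]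
  rw [← greenMatrix_mul_lapMatrix_add_meanMatrix hconn, mul_add, hmean, add_sub_cancel_right]

lemma lapMatrix_mul_greenMatrix (hconn : G.Connected) :
    G.lapMatrix ℝ * greenMatrix G = 1 - meanMatrix V := by
  have := hconn.nonempty
  have hmean : meanMatrix V * greenMatrix G = meanMatrix V := by
    conv_rhs => rw [← mul_one (meanMatrix V), ← lapMatrix_add_meanMatrix_mul_greenMatrix hconn,
      ← Matrix.mul_assoc, mul_add, meanMatrix_mul_lapMatrix, meanMatrix_mul_self, zero_add]
  rw [← lapMatrix_add_meanMatrix_mul_greenMatrix hconn, add_mul, hmean, add_sub_cancel_right]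

lemma sum_sub_sum_smul_single (f : V → ℝ) (y : V) :
    ∑ v, (f - (∑ z, f z) • Pi.single y 1 : V → ℝ) v = 0 := by
  simp [Finset.sum_sub_distrib, ← Finset.mul_sum]

lemma greenMatrix_mulVec_lapMatrix_mulVec (hconn : G.Connected) (g : V → ℝ) :
    greenMatrix G *ᵥ (G.lapMatrix ℝ *ᵥ g) = g - meanMatrix V *ᵥ g := by
  rw [mulVec_mulVec, greenMatrix_mul_lapMatrix hconn, sub_mulVec, one_mulVec]

lemma lapMatrix_mulVec_greenMatrix_mulVec (hconn : G.Connected) {f : V → ℝ}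
    (hf : ∑ v, f v = 0) : G.lapMatrix ℝ *ᵥ (greenMatrix G *ᵥ f) = f := by
  ext u
  rw [mulVec_mulVec, lapMatrix_mul_greenMatrix hconn, sub_mulVec, one_mulVec, Pi.sub_apply,
    meanMatrix_mulVec_apply, hf, mul_zero, sub_zero]

end Green

section Resistance

variable [Fintype V] {G : SimpleGraph V}

lemma eres_self (a : V) : eres G a a = 0 := by
  have : {e : ℝ | ∃ φ : V → ℝ, φ a = 1 ∧ φ a = 0 ∧ e = energyFn G φ} = ∅ := by
    ext e
    simp only [Set.mem_ofPred_eq, Set.mem_empty_iff_false, iff_false]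
    rintro ⟨φ, h1, h0, -⟩
    simp [h1] at h0
  rw [eres, this, Real.sInf_empty, _root_.inv_zero]

/-- Dirichlet's principle: the energy of a unit potential drop from `a` to `b` is minimized by
the potential of a unit current from `a` to `b`. -/
lemma eres_eq_of_lapMatrix_mulVec_eq {a b : V} (hab : a ≠ b) {v : V → ℝ}
    (hv : G.lapMatrix ℝ *ᵥ v = Pi.single a 1 - Pi.single b 1) : eres G a b = v a - v b := by
  have hdrop (φ : V → ℝ) : φ ⬝ᵥ (G.lapMatrix ℝ *ᵥ v) = φ a - φ b := by
    rw [hv, dotProduct_sub, dotProduct_single, dotProduct_single, mul_one, mul_one]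
  set ρ := v a - v b
  have hρ : 0 < ρ := by
    refine (hdrop v ▸ dotProduct_lapMatrix_self_nonneg G v).lt_of_ne' fun h => ?_
    have h0 : star v ⬝ᵥ (G.lapMatrix ℝ *ᵥ v) = 0 := by rw [star_trivial, hdrop, h]
    have := congrFun ((posSemidef_lapMatrix ℝ G).dotProduct_mulVec_zero_iff v |>.mp h0) a
    simp [hv, hab] at this
  set φ₀ : V → ℝ := ρ⁻¹ • (v - fun _ => v b)
  have hlap₀ : G.lapMatrix ℝ *ᵥ φ₀ = ρ⁻¹ • G.lapMatrix ℝ *ᵥ v := by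
    rw [mulVec_smul, mulVec_sub, lapMatrix_mulVec_const, sub_zero]
  have hmin :
      IsLeast {e : ℝ | ∃ φ : V → ℝ, φ a = 1 ∧ φ b = 0 ∧ e = energyFn G φ} ρ⁻¹ := by
    refine ⟨⟨φ₀, ?_, ?_, ?_⟩, ?_⟩
    · simp [φ₀, ρ, hρ.ne']
    · simp [φ₀]
    · rw [energyFn_eq_dotProduct, hlap₀, dotProduct_smul, hdrop]
      simp [φ₀, ρ, hρ.ne']
    · rintro _ ⟨φ, ha, hb, rfl⟩
      have h := dotProduct_lapMatrix_self_nonneg G (φ - ρ⁻¹ • v)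
      rw [mulVec_sub, mulVec_smul, dotProduct_sub, sub_dotProduct, sub_dotProduct,
        dotProduct_smul, smul_dotProduct, smul_dotProduct, dotProduct_smul,
        dotProduct_lapMatrix_comm G v φ, hdrop, hdrop, ha, hb] at h
      simp only [smul_eq_mul, show v a - v b = ρ from rfl, inv_mul_cancel₀ hρ.ne', sub_zero,
        mul_one] at h
      rw [energyFn_eq_dotProduct]
      linarith
  rw [eres, hmin.csInf_eq, inv_inv]

lemma eres_eq_greenMatrix (hconn : G.Connected) (a b : V) :
    eres G a b = greenMatrix G a a + greenMatrix G b b - 2 * greenMatrix G a b := by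
  obtain rfl | hab := eq_or_ne a b
  · rw [eres_self]; ring
  have hsum : ∑ v, (Pi.single a 1 - Pi.single b 1 : V → ℝ) v = 0 := by
    simp [Finset.sum_sub_distrib]
  rw [eres_eq_of_lapMatrix_mulVec_eq hab (lapMatrix_mulVec_greenMatrix_mulVec hconn hsum)]
  simp only [mulVec_sub, mulVec_single_one, Pi.sub_apply, col_apply,
    greenMatrix_isSymm.apply b a]
  ring

lemma sum_lapMatrix_mulVec_mul_eres_sub (hconn : G.Connected) (g : V → ℝ) (x y : V) :
    ∑ z, (G.lapMatrix ℝ *ᵥ g) z * (eres G y z - eres G x z) = 2 * (g x - g y) := by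
  set N := greenMatrix G
  have hN (u : V) : ∑ z, (G.lapMatrix ℝ *ᵥ g) z * N u z = g u - (meanMatrix V *ᵥ g) u := by
    rw [← Pi.sub_apply, ← greenMatrix_mulVec_lapMatrix_mulVec hconn g]
    simp only [N, mulVec, dotProduct, mul_comm]
  have hexpand (z : V) : eres G y z - eres G x z = (N y y - N x x) + 2 * N x z - 2 * N y z := by
    rw [eres_eq_greenMatrix hconn, eres_eq_greenMatrix hconn]; ring
  simp only [hexpand, mul_sub, mul_add, Finset.sum_sub_distrib, Finset.sum_add_distrib,
    ← Finset.sum_mul, sum_lapMatrix_mulVec, zero_mul]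
  simp only [mul_left_comm _ (2 : ℝ), ← Finset.mul_sum, hN, meanMatrix_mulVec_apply]
  ring

end Resistance

section Hitting

variable [Fintype V] {G : SimpleGraph V} {y : V}

lemma degR_pos_of_ne (hconn : G.Connected) {u : V} (hu : u ≠ y) : 0 < degR G u := by
  obtain ⟨p⟩ := hconn.preconnected u y
  cases p with
  | nil => exact absurd rfl hu
  | cons h _ => rw [degR_eq_degree]; exact_mod_cast h.degree_pos_left

lemma hitMat_nonneg (u v : V) : 0 ≤ hitMat G y u v := by
  simp only [hitMat, of_apply]
  split_ifs <;> simp [degR]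

lemma sum_hitMat_mul (u : V) {f : V → ℝ} (hf : f y = 0) :
    ∑ v, hitMat G y u v * f v = (degR G u)⁻¹ * ∑ v ∈ G.neighborFinset u, f v := by
  rw [neighborFinset_eq_filter, Finset.sum_filter, Finset.mul_sum]
  refine Finset.sum_congr rfl fun v _ => ?_
  by_cases hv : v = y
  · simp [hv, hf, hitMat]
  · by_cases huv : G.Adj u v <;> simp [hitMat, hv, huv]

lemma sum_hitMat_le_one (u : V) : ∑ v, hitMat G y u v ≤ 1 := by
  calc ∑ v, hitMat G y u v ≤ ∑ v, if G.Adj u v then (degR G u)⁻¹ else 0 :=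
        Finset.sum_le_sum fun v _ => by
          simp only [hitMat, of_apply]; split_ifs <;> simp [degR]
    _ = degR G u * (degR G u)⁻¹ := by
        rw [← Finset.sum_filter, Finset.sum_const, degR, nsmul_eq_mul]
    _ ≤ 1 := by
        obtain h | h := eq_or_ne (degR G u) 0
        · simp [h]
        · rw [mul_inv_cancel₀ h]

lemma lapMatrix_mulVec_apply_eq_degR_iff {f : V → ℝ} (hf : f y = 0) {u : V}
    (hu : 0 < degR G u) :
    (G.lapMatrix ℝ *ᵥ f) u = degR G u ↔ f u = 1 + ∑ v, hitMat G y u v * f v := by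
  rw [lapMatrix_mulVec_apply, sum_hitMat_mul u hf, ← degR_eq_degree]
  constructor <;> intro h <;> field_simp at h ⊢ <;> linarith

variable (G y) in
noncomputable def survival (k : ℕ) (u : V) : ℝ := ∑ z, (hitMat G y ^ k) u z

lemma hitting_eq_tsum_survival {x : V} (hx : x ≠ y) :
    hitting G x y = ∑' k, survival G y k x := if_neg hx

lemma survival_zero (u : V) : survival G y 0 u = 1 := by
  simp [survival, one_apply]

lemma survival_succ (k : ℕ) (u : V) :
    survival G y (k + 1) u = ∑ v, hitMat G y u v * survival G y k v := by
  simp only [survival, pow_succ', mul_apply, Finset.mul_sum]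
  exact Finset.sum_comm

lemma survival_nonneg (k : ℕ) (u : V) : 0 ≤ survival G y k u := by
  induction k generalizing u with
  | zero => rw [survival_zero]; exact zero_le_one
  | succ k ih =>
    rw [survival_succ]
    exact Finset.sum_nonneg fun v _ => mul_nonneg (hitMat_nonneg u v) (ih v)

lemma exists_lapMatrix_mulVec_eq_degR (hconn : G.Connected) (y : V) :
    ∃ w : V → ℝ, w y = 0 ∧ ∀ u ≠ y, (G.lapMatrix ℝ *ᵥ w) u = degR G u := by
  set p := greenMatrix G *ᵥ (degR G - (∑ z, degR G z) • Pi.single y 1)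
  refine ⟨p - fun _ => p y, by simp, fun u hu => ?_⟩
  rw [mulVec_sub, lapMatrix_mulVec_const, sub_zero,
    lapMatrix_mulVec_greenMatrix_mulVec hconn (sum_sub_sum_smul_single _ y)]
  simp [hu]

/-- Shifted by a nonnegative constant, `w` is a supersolution of the first-step equation. -/
lemma sum_range_survival_le (hconn : G.Connected) {w : V → ℝ} (hwy : w y = 0)
    (hw : ∀ u ≠ y, (G.lapMatrix ℝ *ᵥ w) u = degR G u) (K : ℕ) {u : V} (hu : u ≠ y) :
    ∑ k ∈ Finset.range K, survival G y k u ≤ w u + ∑ v, |w v| := by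
  set c := ∑ v, |w v|
  have hc : 0 ≤ c := Finset.sum_nonneg fun v _ => abs_nonneg _
  induction K generalizing u with
  | zero =>
    have : |w u| ≤ c := Finset.single_le_sum (fun v _ => abs_nonneg (w v)) (Finset.mem_univ u)
    simp only [Finset.range_zero, Finset.sum_empty]
    linarith [neg_le_abs (w u)]
  | succ K ih =>
    have hstep : ∀ v, hitMat G y u v * ∑ k ∈ Finset.range K, survival G y k v
        ≤ hitMat G y u v * (w v + c) := fun v => by
      obtain rfl | hv := eq_or_ne v y
      · simp [hitMat]
      · exact mul_le_mul_of_nonneg_left (ih hv) (hitMat_nonneg u v)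
    have hfirst :=
      (lapMatrix_mulVec_apply_eq_degR_iff hwy (degR_pos_of_ne hconn hu)).mp (hw u hu)
    calc ∑ k ∈ Finset.range (K + 1), survival G y k u
        = 1 + ∑ v, hitMat G y u v * ∑ k ∈ Finset.range K, survival G y k v := by
          simp only [Finset.sum_range_succ', survival_succ, survival_zero, Finset.mul_sum]
          rw [add_comm, Finset.sum_comm]
      _ ≤ 1 + ∑ v, hitMat G y u v * (w v + c) :=
          (add_le_add_iff_left 1).mpr (Finset.sum_le_sum fun v _ => hstep v)
      _ = 1 + ∑ v, hitMat G y u v * w v + c * ∑ v, hitMat G y u v := by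
          simp only [mul_add, Finset.sum_add_distrib, ← Finset.sum_mul]; ring
      _ ≤ w u + c := by
          linarith [mul_le_of_le_one_right hc (sum_hitMat_le_one (G := G) (y := y) u)]

lemma summable_survival (hconn : G.Connected) {u : V} (hu : u ≠ y) :
    Summable (survival G y · u) := by
  obtain ⟨w, hwy, hw⟩ := exists_lapMatrix_mulVec_eq_degR hconn y
  exact summable_of_sum_range_le (survival_nonneg · u)
    fun K => sum_range_survival_le hconn hwy hw K hu

lemma tsum_survival (hconn : G.Connected) {u : V} (hu : u ≠ y) :
    ∑' k, survival G y k u = 1 + ∑ v, hitMat G y u v * ∑' k, survival G y k v := by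
  rw [(summable_survival hconn hu).tsum_eq_zero_add, survival_zero]
  simp only [survival_succ, ← tsum_mul_left]
  congr 1
  refine Summable.tsum_finsetSum fun v _ => ?_
  obtain rfl | hv := eq_or_ne v y
  · simp [hitMat]
  · exact (summable_survival hconn hv).mul_left _

lemma lapMatrix_mulVec_hitting (hconn : G.Connected) (y : V) :
    G.lapMatrix ℝ *ᵥ (hitting G · y) = degR G - (∑ z, degR G z) • Pi.single y 1 := by
  set t := degR G - (∑ z, degR G z) • Pi.single y 1
  have hoff (u : V) (hu : u ≠ y) : (G.lapMatrix ℝ *ᵥ (hitting G · y) - t) u = 0 := by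
    have htu : t u = degR G u := by simp [t, hu]
    rw [Pi.sub_apply, sub_eq_zero, htu, lapMatrix_mulVec_apply_eq_degR_iff
      (f := fun v => hitting G v y) (if_pos rfl)
      (degR_pos_of_ne hconn hu), hitting_eq_tsum_survival hu, tsum_survival hconn hu]
    congr 1
    refine Finset.sum_congr rfl fun v _ => ?_
    obtain rfl | hv := eq_or_ne v y
    · simp [hitMat, hitting]
    · rw [hitting_eq_tsum_survival hv]
  have hsum : ∑ v, (G.lapMatrix ℝ *ᵥ (hitting G · y) - t) v = 0 := by
    simp only [Pi.sub_apply, Finset.sum_sub_distrib, sum_lapMatrix_mulVec]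
    rw [zero_sub, neg_eq_zero]
    exact sum_sub_sum_smul_single _ _
  rw [Finset.sum_eq_single y (fun v _ hv => hoff v hv) (by simp)] at hsum
  rw [← sub_eq_zero]
  ext u
  obtain rfl | hu := eq_or_ne u y
  exacts [hsum, hoff u hu]

end Hitting

lemma exists_adj_dist_add_one_eq {G : SimpleGraph V} (hconn : G.Connected) {u z : V}
    (h : u ≠ z) :
    ∃ w, G.Adj u w ∧ G.dist w z + 1 = G.dist u z := by
  obtain ⟨p, hp⟩ := hconn.exists_walk_length_eq_dist u z
  cases p with
  | nil => exact absurd rfl h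
  | @cons _ w _ huw q =>
    refine ⟨w, huw, le_antisymm ?_ ?_⟩
    · rw [← hp, Walk.length_cons]
      exact Nat.add_le_add_right (dist_le q) 1
    · rw [add_comm, ← dist_eq_one_iff_adj.mpr huw]
      exact hconn.dist_triangle

lemma Fin.add_one_ne_sub_one {l : ℕ} [NeZero l] (hl : 3 ≤ l) (k : Fin l) : k + 1 ≠ k - 1 := by
  intro h
  rw [sub_eq_add_neg, add_right_inj, eq_neg_iff_add_eq_zero, Fin.ext_iff, Fin.val_add,
    Fin.val_one', Fin.val_zero, Nat.mod_eq_of_lt (by omega : 1 < l),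
    Nat.mod_eq_of_lt (by omega : 2 < l)] at h
  omega

section DistToSet

variable [Fintype V] {G : SimpleGraph V} {s : Set V}

lemma distToSet_le {u z : V} (hz : z ∈ s) : distToSet G u s ≤ G.dist u z :=
  Nat.sInf_le ⟨z, hz, rfl⟩

lemma distToSet_eq_zero_of_mem {u : V} (hu : u ∈ s) : distToSet G u s = 0 :=
  Nat.eq_zero_of_le_zero ((distToSet_le hu).trans_eq dist_self)

lemma exists_dist_eq_distToSet (hs : s.Nonempty) (u : V) :
    ∃ z ∈ s, G.dist u z = distToSet G u s :=
  Nat.sInf_mem (hs.image (G.dist u))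

lemma distToSet_le_add_one (hconn : G.Connected) (hs : s.Nonempty) {u v : V} (h : G.Adj u v) :
    distToSet G v s ≤ distToSet G u s + 1 := by
  obtain ⟨z, hz, hdist⟩ := exists_dist_eq_distToSet (G := G) hs u
  calc distToSet G v s ≤ G.dist v u + G.dist u z := (distToSet_le hz).trans hconn.dist_triangle
    _ = distToSet G u s + 1 := by rw [dist_eq_one_iff_adj.mpr h.symm, hdist, add_comm]

end DistToSet

section Unicyclic

variable [Fintype V] {G : SimpleGraph V} {s : Set V}

variable (G s) in
noncomputable def distSlack (u v : V) : ℝ := (distToSet G u s : ℝ) + 1 - distToSet G v s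

lemma distSlack_nonneg (hconn : G.Connected) (hs : s.Nonempty) {u v : V} (h : G.Adj u v) :
    0 ≤ distSlack G s u v := by
  have := distToSet_le_add_one hconn hs h
  rw [distSlack, sub_nonneg]
  exact_mod_cast this

lemma sum_distSlack (u : V) :
    ∑ v ∈ G.neighborFinset u, distSlack G s u v
      = (G.lapMatrix ℝ *ᵥ fun v => (distToSet G v s : ℝ)) u + degR G u := by
  rw [lapMatrix_mulVec_apply, degR_eq_degree]
  simp only [distSlack, Finset.sum_sub_distrib, Finset.sum_const, card_neighborFinset_eq_degree,
    nsmul_eq_mul]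
  ring

lemma two_le_distSlack_of_dist_add_one_eq {u w z : V} (hz : z ∈ s)
    (hu : G.dist u z = distToSet G u s) (hw : G.dist w z + 1 = G.dist u z) :
    2 ≤ distSlack G s u w := by
  have := distToSet_le (G := G) (u := w) hz
  have : (distToSet G w s : ℝ) + 1 ≤ distToSet G u s := by exact_mod_cast (by omega)
  rw [distSlack]
  linarith

lemma mem_of_distSlack_pos (hconn : G.Connected) (hs : s.Nonempty) {u a : V}
    (hsum : ∑ v ∈ G.neighborFinset u, distSlack G s u v = 2) {t : Finset V}
    (ht : t ⊆ G.neighborFinset u) (htwo : 2 ≤ ∑ v ∈ t, distSlack G s u v) (ha : G.Adj u a)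
    (hpos : 0 < distSlack G s u a) : a ∈ t := by
  by_contra hat
  have hsub : insert a t ⊆ G.neighborFinset u := Finset.insert_subset (by simpa using ha) ht
  have := Finset.sum_le_sum_of_subset_of_nonneg hsub fun v hv _ =>
    distSlack_nonneg hconn hs ((mem_neighborFinset G u v).mp hv)
  rw [Finset.sum_insert hat] at this
  linarith

variable {l : ℕ} [NeZero l] {c : Fin l → V}

lemma cycle_neighbors_subset (hadj : ∀ i : Fin l, G.Adj (c i) (c (i + 1))) (k : Fin l) :
    {c (k + 1), c (k - 1)} ⊆ G.neighborFinset (c k) := by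
  have hprev : G.Adj (c k) (c (k - 1)) := by simpa using (hadj (k - 1)).symm
  simp [Finset.insert_subset_iff, hadj k, hprev]

lemma sum_distSlack_cycle_neighbors (hl : 3 ≤ l) (hinj : Function.Injective c) (k : Fin l) :
    ∑ v ∈ {c (k + 1), c (k - 1)}, distSlack G (Set.range c) (c k) v = 2 := by
  rw [Finset.sum_pair (hinj.ne (Fin.add_one_ne_sub_one hl k))]
  simp only [distSlack, distToSet_eq_zero_of_mem (Set.mem_range_self _)]
  norm_num

lemma two_le_sum_distSlack (hconn : G.Connected) (hl : 3 ≤ l) (hinj : Function.Injective c)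
    (hadj : ∀ i : Fin l, G.Adj (c i) (c (i + 1))) (u : V) :
    2 ≤ ∑ v ∈ G.neighborFinset u, distSlack G (Set.range c) u v := by
  have hs : (Set.range c).Nonempty := Set.range_nonempty c
  have hnonneg : ∀ v ∈ G.neighborFinset u, 0 ≤ distSlack G (Set.range c) u v :=
    fun v hv => distSlack_nonneg hconn hs ((mem_neighborFinset G u v).mp hv)
  by_cases hu : u ∈ Set.range c
  · obtain ⟨k, rfl⟩ := hu
    rw [← sum_distSlack_cycle_neighbors hl hinj k]
    exact Finset.sum_le_sum_of_subset_of_nonneg (cycle_neighbors_subset hadj k)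
      fun v hv _ => hnonneg v hv
  · obtain ⟨z, hz, hdist⟩ := exists_dist_eq_distToSet (G := G) hs u
    obtain ⟨w, huw, hw⟩ := exists_adj_dist_add_one_eq hconn (ne_of_mem_of_not_mem hz hu).symm
    exact (two_le_distSlack_of_dist_add_one_eq hz hdist hw).trans
      (Finset.single_le_sum hnonneg ((mem_neighborFinset G u w).mpr huw))

/-- The bound of `two_le_sum_distSlack` is attained everywhere, because the slacks at all
vertices sum to `2 |E| = 2 |V|`. -/
lemma sum_distSlack_eq_two (hconn : G.Connected) (hl : 3 ≤ l) (hinj : Function.Injective c)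
    (hadj : ∀ i : Fin l, G.Adj (c i) (c (i + 1)))
    (hdeg : ∑ u, degR G u = 2 * Fintype.card V) (u : V) :
    ∑ v ∈ G.neighborFinset u, distSlack G (Set.range c) u v = 2 := by
  have htotal :
      ∑ u, ∑ v ∈ G.neighborFinset u, distSlack G (Set.range c) u v = ∑ _u : V, 2 := by
    simp only [sum_distSlack, Finset.sum_add_distrib, sum_lapMatrix_mulVec, hdeg]
    simp [mul_comm]
  exact ((Finset.sum_eq_sum_iff_of_le fun u _ => two_le_sum_distSlack hconn hl hinj hadj u).mp
    htotal.symm u (Finset.mem_univ u)).symm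

lemma lapMatrix_mulVec_distToSet (hconn : G.Connected) (hl : 3 ≤ l)
    (hinj : Function.Injective c) (hadj : ∀ i : Fin l, G.Adj (c i) (c (i + 1)))
    (hdeg : ∑ u, degR G u = 2 * Fintype.card V) :
    G.lapMatrix ℝ *ᵥ (fun v => (distToSet G v (Set.range c) : ℝ))
      = fun u => 2 - degR G u := by
  ext u
  linarith [sum_distSlack (G := G) (s := Set.range c) u,
    sum_distSlack_eq_two hconn hl hinj hadj hdeg u]

/-- By `sum_distSlack_eq_two`, a vertex off the cycle has a single neighbor closer to the cycle,
and a cycle vertex has no neighbor on the cycle except its two cycle neighbors. -/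
lemma dist_eq_distToSet_of_adj (hconn : G.Connected) (hl : 3 ≤ l)
    (hinj : Function.Injective c) (hadj : ∀ i : Fin l, G.Adj (c i) (c (i + 1)))
    (hdeg : ∑ u, degR G u = 2 * Fintype.card V) {i : Fin l} {a b : V}
    (hab : (G.deleteEdges (cycleEdges c)).Adj a b)
    (hb : G.dist b (c i) = distToSet G b (Set.range c)) :
    G.dist a (c i) = distToSet G a (Set.range c) := by
  obtain ⟨hab, hnot⟩ := deleteEdges_adj.mp hab
  have hs : (Set.range c).Nonempty := Set.range_nonempty c
  have hsum := sum_distSlack_eq_two hconn hl hinj hadj hdeg b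
  have hle := distToSet_le (G := G) (u := a) (Set.mem_range_self (f := c) i)
  have hlip := distToSet_le_add_one hconn hs hab
  rcases (distToSet_le_add_one hconn hs hab.symm).eq_or_lt with hup | hlt
  · have := hconn.dist_triangle (u := a) (v := b) (w := c i)
    rw [dist_eq_one_iff_adj.mpr hab] at this
    omega
  have hpos : 0 < distSlack G (Set.range c) b a := by
    have : (distToSet G a (Set.range c) : ℝ) < distToSet G b (Set.range c) + 1 := by
      exact_mod_cast hlt
    rw [distSlack]
    linarith
  by_cases hb0 : b = c i
  · subst hb0
    have hmem := mem_of_distSlack_pos hconn hs hsum (cycle_neighbors_subset hadj i)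
      (sum_distSlack_cycle_neighbors hl hinj i).ge hab.symm hpos
    refine absurd ?_ hnot
    rcases Finset.mem_insert.mp hmem with rfl | hmem
    · exact ⟨i, Sym2.eq_swap⟩
    rcases Finset.mem_singleton.mp hmem with rfl
    exact ⟨i - 1, by simp⟩
  · obtain ⟨w, hbw, hw⟩ := exists_adj_dist_add_one_eq hconn hb0
    have hwslack := two_le_distSlack_of_dist_add_one_eq (Set.mem_range_self i) hb hw
    have haw : a = w := Finset.mem_singleton.mp <| mem_of_distSlack_pos hconn hs hsum
      (by simpa using hbw) (by simpa using hwslack) hab.symm hpos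
    subst haw
    omega


lemma dist_eq_distToSet_of_reachable (hconn : G.Connected) (hl : 3 ≤ l)
    (hinj : Function.Injective c) (hadj : ∀ i : Fin l, G.Adj (c i) (c (i + 1)))
    (hdeg : ∑ u, degR G u = 2 * Fintype.card V) {i : Fin l} {x : V}
    (hx : (G.deleteEdges (cycleEdges c)).Reachable (c i) x) :
    G.dist x (c i) = distToSet G x (Set.range c) := by
  obtain ⟨p⟩ := hx.symm
  suffices ∀ {a b : V}, (G.deleteEdges (cycleEdges c)).Walk a b → b = c i →
      G.dist a (c i) = distToSet G a (Set.range c) from this p rfl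
  intro a b p
  induction p with
  | nil => rintro rfl; rw [dist_self, distToSet_eq_zero_of_mem (Set.mem_range_self i)]
  | cons hab _ ih => exact fun hb => dist_eq_distToSet_of_adj hconn hl hinj hadj hdeg hab (ih hb)

end Unicyclic

/-- For an `n`-vertex unicyclic graph `G` with `x ∈ V(T_i)` and
`y ∈ V(T_j)`, `H_{xy} = n·r(x,y) + R(y) − R(x) + d(y,v_j) − d(x,v_i)`. -/
theorem hitting_unicyclic [Fintype V] (G : SimpleGraph V) (n l : ℕ) [NeZero l]
    (hn : Fintype.card V = n) (hconn : G.Connected) (huni : esize G = n)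
    (hl : 3 ≤ l) (c : Fin l → V) (hinj : Function.Injective c)
    (hadj : ∀ i : Fin l, G.Adj (c i) (c (i + 1)))
    (i j : Fin l) (x y : V)
    (hx : (G.deleteEdges (cycleEdges c)).Reachable (c i) x)
    (hy : (G.deleteEdges (cycleEdges c)).Reachable (c j) y) :
    hitting G x y = (n : ℝ) * eres G x y + Rres G y - Rres G x
      + (G.dist y (c j) : ℝ) - (G.dist x (c i) : ℝ) := by
  have hdeg : ∑ u, degR G u = 2 * Fintype.card V := by
    rw [sum_degR_eq_two_mul_card_edgeSet, ← esize, huni, hn]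
  set d : V → ℝ := fun v => (distToSet G v (Set.range c) : ℝ)
  have hL : G.lapMatrix ℝ *ᵥ (fun v => hitting G v y + d v)
      = fun z => 2 - 2 * (n : ℝ) * if z = y then 1 else 0 := by
    rw [show (fun v => hitting G v y + d v) = (hitting G · y) + d from rfl, mulVec_add,
      lapMatrix_mulVec_hitting hconn, lapMatrix_mulVec_distToSet hconn hl hinj hadj hdeg, hdeg, hn]
    ext z
    simp only [Pi.add_apply, Pi.sub_apply, Pi.smul_apply, smul_eq_mul, Pi.single_apply]
    ring
  have key := sum_lapMatrix_mulVec_mul_eres_sub hconn (fun v => hitting G v y + d v) x y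
  have hyy : hitting G y y = 0 := if_pos rfl
  simp only [hL, hyy, sub_mul, Finset.sum_sub_distrib, mul_assoc, ← Finset.mul_sum, ite_mul,
    one_mul, zero_mul, Finset.sum_ite_eq', Finset.mem_univ, if_true, eres_self] at key
  rw [dist_eq_distToSet_of_reachable hconn hl hinj hadj hdeg hx,
    dist_eq_distToSet_of_reachable hconn hl hinj hadj hdeg hy, Rres, Rres]
  linarith
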